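/- Runtime of the WU algorithm under random failures: let n ≥ 2, let c > 1 be a real constant, and let p ∈ (0,1). Then μ_p { b : ℕ → Bool | (c/p)·(⌈log₂(n−1)⌉ + 1) < (HWU (n−1) b : ℕ∞) } ≤ n · exp( − ((c−1)²/(2c)) · (⌈log₂(n−1)⌉ − 1) ). That is, with probability at least 1 − n·exp(−((c−1)²/(2c))(⌈log₂(n−1)⌉−1)), the WU algorithm with success rate p delivers the rumor to all n processors within (c/p)(⌈log₂(n−1)⌉+1) rounds. -/

import Mathlib

def oddSeq (b : ℕ → Bool) : ℕ → Bool := fun i => b (2*i)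
def evenSeq (b : ℕ → Bool) : ℕ → Bool := fun i => b (2*i+1)

/-- Time complexity of the WU (wakeup) algorithm with `n` uninformed processors
under failure pattern `b`, valued in the extended naturals. -/
noncomputable def HWU : ℕ → (ℕ → Bool) → ℕ∞
  | 0, _ => 0
  | n+1, b =>
    have : Decidable (∃ k, b k = true) := Classical.propDecidable _
    if h : ∃ k, b k = true then
      ((Nat.find h + 1 : ℕ) : ℕ∞) +
        max (HWU ((n+1)/2) (oddSeq (fun i => b (i + Nat.find h + 1))))
            (HWU (n/2) (evenSeq (fun i => b (i + Nat.find h + 1))))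
    else ⊤
decreasing_by all_goals omega

open MeasureTheory ENNReal

/-!
Write `L = ⌈log₂ m⌉` and `r = 1 - p + p / c`. Following the recursion of `HWU`, strong induction on
`m` gives `P(t < HWU m) ≤ m · c ^ L · r ^ t` for every `c ≥ 1`: a union bound over the `m`
processors combined with the Chernoff bound for a sum of at most `L + 1` geometric waiting times.
In the inductive step one conditions on the position `k` of the first successful request. That
event has probability `p (1 - p) ^ k` and is independent of the two subsequences read by the
subtrees, which are again i.i.d. Bernoulli(p), and the convolution of the geometric weights with
`r ^ (t - k - 1)` sums in closed form. For `t ≥ (c / p) (L + 1) - 1`, the estimate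
`log c ≤ (c - c⁻¹) / 2` turns `c ^ L · r ^ t` into `exp (-(c - 1)² / (2c) · L)`.
-/

open ProbabilityTheory

lemma Bool.set_eq_singleton_of_mem {t : Set Bool} {x : Bool} (hx : x ∈ t) (ht : t ≠ Set.univ) :
    t = {x} := by
  refine Set.Subset.antisymm (fun y hy ↦ ?_) (Set.singleton_subset_iff.2 hx)
  by_contra hyx
  exact ht (Set.eq_univ_of_forall fun z ↦ by cases x <;> cases y <;> cases z <;> simp_all)

lemma ENat.natCast_lt_natCast_add_iff (s k : ℕ) (x : ℕ∞) :
    (s : ℕ∞) < k + x ↔ s < k ∨ ((s - k : ℕ) : ℕ∞) < x := by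
  cases x with
  | top => simp only [add_top, ENat.natCast_lt_top, or_true]
  | coe x => norm_cast; omega

lemma Nat.clog_two_add_one_le {a n : ℕ} (ha : 0 < a) (h : 2 * a ≤ n) :
    Nat.clog 2 a + 1 ≤ Nat.clog 2 n := by
  calc Nat.clog 2 a + 1 = Nat.clog 2 (2 * a) := by
        rw [Nat.clog_of_two_le (n := 2 * a) one_lt_two (by omega),
          show (2 * a + 2 - 1) / 2 = a by omega]
    _ ≤ Nat.clog 2 n := Nat.clog_mono_right 2 h

lemma natFloor_lt_of_ofReal_lt {x : ℝ} (hx : 0 ≤ x) {N : ℕ∞}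
    (h : ENNReal.ofReal x < (N : ℝ≥0∞)) : (⌊x⌋₊ : ℕ∞) < N := by
  cases N with
  | top => exact ENat.natCast_lt_top _
  | coe N =>
    rw [ENat.toENNReal_coe, ← ENNReal.ofReal_natCast] at h
    have hxN : x < N := (ENNReal.ofReal_lt_ofReal_iff_of_nonneg hx).1 h
    exact_mod_cast (Nat.floor_lt hx).2 hxN

lemma pow_add_sum_mul_pow_le {p q c X : ℝ} (hp : 0 ≤ p) (hq : 0 ≤ q) (hc : 0 < c) (hX : 0 ≤ X)
    (t : ℕ) :
    q ^ t + ∑ k ∈ Finset.range t, p * q ^ k * (X * (q + p / c) ^ (t - (k + 1))) ≤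
      (X * c + 1) * (q + p / c) ^ t := by
  have hgeom : p * ∑ k ∈ Finset.range t, q ^ k * (q + p / c) ^ (t - 1 - k) =
      c * ((q + p / c) ^ t - q ^ t) := by
    have hcp : c * (p / c) = p := mul_div_cancel₀ p hc.ne'
    linear_combination (-c) * geom_sum₂_mul q (q + p / c) t -
      (∑ k ∈ Finset.range t, q ^ k * (q + p / c) ^ (t - 1 - k)) * hcp
  have hsum : ∑ k ∈ Finset.range t, p * q ^ k * (X * (q + p / c) ^ (t - (k + 1))) =
      X * (p * ∑ k ∈ Finset.range t, q ^ k * (q + p / c) ^ (t - 1 - k)) := by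
    rw [Finset.mul_sum, Finset.mul_sum]
    exact Finset.sum_congr rfl fun k _ ↦ by rw [Nat.sub_sub, add_comm 1 k]; ring
  have hqt : q ^ t ≤ (q + p / c) ^ t :=
    pow_le_pow_left₀ hq (le_add_of_nonneg_right (div_nonneg hp hc.le)) t
  rw [hsum, hgeom]
  nlinarith [mul_nonneg hX hc.le, pow_nonneg hq t]

lemma natCast_mul_pow_clog_mul_le {c : ℝ} (hc : 1 ≤ c) {a n : ℕ} (h : 2 * a ≤ n) :
    (a : ℝ) * c ^ Nat.clog 2 a * c ≤ a * c ^ Nat.clog 2 n := by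
  rcases a.eq_zero_or_pos with rfl | ha
  · simp
  rw [mul_assoc, ← pow_succ]
  exact mul_le_mul_of_nonneg_left (pow_le_pow_right₀ hc (Nat.clog_two_add_one_le ha h))
    (Nat.cast_nonneg a)

lemma pow_mul_pow_le_exp {c p : ℝ} (hc : 1 ≤ c) (hp0 : 0 ≤ p) (hp1 : p ≤ 1) {L t : ℕ}
    (ht : c * L ≤ p * t) :
    c ^ L * (1 - p + p / c) ^ t ≤ Real.exp (-((c - 1) ^ 2 / (2 * c)) * L) := by
  have hc0 : 0 < c := by linarith
  have hlog : Real.log c ≤ (c - c⁻¹) / 2 := by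
    rw [← Real.sinh_log hc0]
    exact Real.self_le_sinh_iff.2 (Real.log_nonneg hc)
  have hbase : 1 - p + p / c ≤ Real.exp (p / c - p) := by
    linarith [Real.add_one_le_exp (p / c - p)]
  have hexponent : L * Real.log c + t * (p / c - p) ≤ -((c - 1) ^ 2 / (2 * c)) * L := by
    have e : (c - c⁻¹) / 2 - (c - 1) = -((c - 1) ^ 2 / (2 * c)) := by field_simp; ring
    have hcinv : c * c⁻¹ = 1 := mul_inv_cancel₀ hc0.ne'
    have h1 : (p * t) * (c⁻¹ - 1) ≤ (c * L) * (c⁻¹ - 1) :=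
      mul_le_mul_of_nonpos_right ht (by linarith [inv_le_one_of_one_le₀ hc])
    have h2 : (L : ℝ) * Real.log c ≤ L * ((c - c⁻¹) / 2) :=
      mul_le_mul_of_nonneg_left hlog (Nat.cast_nonneg L)
    rw [← e, div_eq_mul_inv p c]
    linear_combination h1 + h2 + (L : ℝ) * hcinv
  calc c ^ L * (1 - p + p / c) ^ t
      ≤ Real.exp (L * Real.log c) * Real.exp (t * (p / c - p)) := by
        rw [Real.exp_nat_mul, Real.exp_nat_mul, Real.exp_log hc0]
        gcongr
    _ ≤ Real.exp (-((c - 1) ^ 2 / (2 * c)) * L) := by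
        rw [← Real.exp_add]
        exact Real.exp_le_exp.2 hexponent

noncomputable def bernoulliBool (p : ℝ) : Measure Bool :=
  ENNReal.ofReal p • Measure.dirac true + ENNReal.ofReal (1 - p) • Measure.dirac false

noncomputable def bernoulliSeq (p : ℝ) : Measure (ℕ → Bool) :=
  Measure.infinitePi fun _ ↦ bernoulliBool p

lemma bernoulliBool_singleton (p : ℝ) (x : Bool) :
    bernoulliBool p {x} = if x then ENNReal.ofReal p else ENNReal.ofReal (1 - p) := by
  cases x <;> simp [bernoulliBool]

lemma measurable_reindex (f : ℕ → ℕ) : Measurable fun (b : ℕ → Bool) j ↦ b (f j) := by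
  fun_prop

section Bernoulli

variable {p : ℝ} [hp : Fact (p ∈ Set.Icc (0 : ℝ) 1)]

instance : IsProbabilityMeasure (bernoulliBool p) :=
  ⟨by simp [bernoulliBool, ← ENNReal.ofReal_add hp.out.1 (sub_nonneg.2 hp.out.2)]⟩

instance : IsProbabilityMeasure (bernoulliSeq p) := by
  unfold bernoulliSeq
  infer_instance

lemma bernoulliSeq_cylinder (s : Finset ℕ) (v : ℕ → Bool) :
    bernoulliSeq p {b | ∀ i ∈ s, b i = v i} =
      ∏ i ∈ s, if v i then ENNReal.ofReal p else ENNReal.ofReal (1 - p) := by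
  simp_rw [← bernoulliBool_singleton]
  exact Measure.infinitePi_pi _ fun _ _ ↦ measurableSet_singleton _

lemma measureReal_bernoulliSeq_cylinder (s : Finset ℕ) (v : ℕ → Bool) :
    (bernoulliSeq p).real {b | ∀ i ∈ s, b i = v i} = ∏ i ∈ s, if v i then p else 1 - p := by
  simp [measureReal_def, bernoulliSeq_cylinder, ENNReal.toReal_prod, apply_ite ENNReal.toReal,
    hp.out.1, hp.out.2]

lemma eq_bernoulliSeq_of_cylinder {μ : Measure (ℕ → Bool)}
    (hμ : ∀ (s : Finset ℕ) (v : ℕ → Bool), μ {b | ∀ i ∈ s, b i = v i} =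
      ∏ i ∈ s, if v i then ENNReal.ofReal p else ENNReal.ofReal (1 - p)) :
    μ = bernoulliSeq p := by
  classical
  refine Measure.eq_infinitePi _ fun s t _ ↦ ?_
  by_cases hempty : ∃ i ∈ s, t i = ∅
  · obtain ⟨i, hi, hti⟩ := hempty
    rw [Set.pi_eq_empty (Finset.mem_coe.2 hi) hti, measure_empty,
      Finset.prod_eq_zero hi (by simp [hti])]
  push Not at hempty
  choose! v hv using hempty
  -- A box in `ℕ → Bool` is the cylinder fixing the coordinates where its side is a singleton.
  have hbox : Set.pi s t = {b | ∀ i ∈ s.filter (t · ≠ Set.univ), b i = v i} := by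
    ext b
    simp only [Set.mem_pi, Finset.mem_coe, Finset.mem_filter, Set.mem_ofPred_eq, and_imp]
    refine forall₂_congr fun i hi ↦ ?_
    by_cases hti : t i = Set.univ
    · simp [hti]
    · simp only [hti, ne_eq, not_false_eq_true, forall_const]
      rw [Bool.set_eq_singleton_of_mem (hv i hi) hti, Set.mem_singleton_iff]
  rw [hbox, hμ, ← Finset.prod_filter_of_ne (f := fun i ↦ bernoulliBool p (t i))
    (p := (t · ≠ Set.univ)) fun i _ h ↦ by contrapose! h; rw [h, measure_univ]]
  refine Finset.prod_congr rfl fun i hi ↦ ?_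
  rw [Finset.mem_filter] at hi
  rw [Bool.set_eq_singleton_of_mem (hv i hi.1) hi.2, bernoulliBool_singleton]

lemma bernoulliSeq_map_comp {f : ℕ → ℕ} (hf : f.Injective) :
    (bernoulliSeq p).map (fun b j ↦ b (f j)) = bernoulliSeq p :=
  Measure.map_infinitePi_infinitePi_of_inj hf

lemma bernoulliSeq_preimage_comp_inter {f g : ℕ → ℕ} (hfg : ∀ i j, f i ≠ g j)
    {A B : Set (ℕ → Bool)} (hA : MeasurableSet A) (hB : MeasurableSet B) :
    bernoulliSeq p ((fun b j ↦ b (f j)) ⁻¹' A ∩ (fun b j ↦ b (g j)) ⁻¹' B) =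
      bernoulliSeq p ((fun b j ↦ b (f j)) ⁻¹' A) * bernoulliSeq p ((fun b j ↦ b (g j)) ⁻¹' B) := by
  set m : ℕ → MeasurableSpace (ℕ → Bool) :=
    fun i ↦ MeasurableSpace.comap (fun b ↦ b i) inferInstance
  have hindep : iIndep m (bernoulliSeq p) := (iIndepFun_iff_iIndep _ _ _).1
    (iIndepFun_infinitePi (X := fun _ x ↦ x) fun _ ↦ measurable_id)
  have hmeas (h : ℕ → ℕ) : Measurable[⨆ i ∈ Set.range h, m i] (fun b j ↦ b (h j)) :=
    (@measurable_pi_iff _ _ _ (⨆ i ∈ Set.range h, m i) _ _).2 fun j ↦ (comap_measurable _).mono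
      (le_iSup₂ (f := fun i (_ : i ∈ Set.range h) ↦ m i) (h j) ⟨j, rfl⟩) le_rfl
  exact (Indep_iff _ _ _).1 (indep_iSup_of_disjoint (fun i ↦ (measurable_pi_apply i).comap_le)
    hindep (Set.disjoint_range_iff.2 hfg)) _ _ (hmeas f hA) (hmeas g hB)

def firstTrueAt (k : ℕ) : Set (ℕ → Bool) := {b | b k = true ∧ ∀ i < k, b i = false}

lemma firstTrueAt_eq_cylinder (k : ℕ) :
    firstTrueAt k = {b | ∀ i ∈ Finset.range (k + 1), b i = decide (i = k)} := by
  ext b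
  simp only [firstTrueAt, Finset.mem_range, Set.mem_ofPred_eq, Nat.lt_succ_iff_lt_or_eq,
    or_imp, forall_and, forall_eq, decide_true]
  exact ⟨fun h ↦ ⟨fun i hi ↦ by simp [h.2 i hi, hi.ne], h.1⟩,
    fun h ↦ ⟨h.2, fun i hi ↦ by simpa [hi.ne] using h.1 i hi⟩⟩

lemma measurableSet_firstTrueAt (k : ℕ) : MeasurableSet (firstTrueAt k) := by
  rw [firstTrueAt_eq_cylinder]
  exact .pi (Finset.countable_toSet _) fun i _ ↦ measurableSet_singleton _

lemma exists_le_mem_firstTrueAt {b : ℕ → Bool} {i : ℕ} (hi : b i = true) :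
    ∃ k ≤ i, b ∈ firstTrueAt k := by
  classical
  have h : ∃ k, b k = true := ⟨i, hi⟩
  exact ⟨Nat.find h, Nat.find_min' h hi, Nat.find_spec h,
    fun j hj ↦ by simpa using Nat.find_min h hj⟩

lemma measureReal_firstTrueAt (k : ℕ) :
    (bernoulliSeq p).real (firstTrueAt k) = p * (1 - p) ^ k := by
  rw [firstTrueAt_eq_cylinder, measureReal_bernoulliSeq_cylinder, Finset.prod_range_succ,
    Finset.prod_congr rfl fun i hi ↦ by rw [decide_eq_false (Finset.mem_range.1 hi).ne]]
  simp [mul_comm]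

lemma measureReal_forall_lt_false (t : ℕ) :
    (bernoulliSeq p).real {b | ∀ i < t, b i = false} = (1 - p) ^ t := by
  simpa using measureReal_bernoulliSeq_cylinder (p := p) (Finset.range t) fun _ ↦ false

lemma measureReal_firstTrueAt_inter_preimage {k : ℕ} {f : ℕ → ℕ} (hf : f.Injective)
    (hkf : ∀ j, k < f j) {B : Set (ℕ → Bool)} (hB : MeasurableSet B) :
    (bernoulliSeq p).real (firstTrueAt k ∩ (fun b j ↦ b (f j)) ⁻¹' B) =
      p * (1 - p) ^ k * (bernoulliSeq p).real B := by
  -- `firstTrueAt k` only looks at the coordinates `≤ k`, all of which `f` avoids.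
  have hfirst : firstTrueAt k = (fun b j ↦ b (min j k)) ⁻¹' firstTrueAt k := by
    ext b
    simp only [firstTrueAt, Set.mem_preimage, Set.mem_ofPred_eq, min_self]
    exact and_congr_right' (forall₂_congr fun i hi ↦ by rw [min_eq_left hi.le])
  have hsplit := bernoulliSeq_preimage_comp_inter (p := p)
    (fun i j ↦ ((min_le_right i k).trans_lt (hkf j)).ne) (measurableSet_firstTrueAt k) hB
  rw [← hfirst, ← Measure.map_apply (measurable_reindex f) hB, bernoulliSeq_map_comp hf]
    at hsplit
  rw [measureReal_def, hsplit, ENNReal.toReal_mul, ← measureReal_def, ← measureReal_def,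
    measureReal_firstTrueAt]

lemma HWU_succ_of_forall_false (m : ℕ) {b : ℕ → Bool} (hb : ∀ k, b k = false) :
    HWU (m + 1) b = ⊤ := by
  rw [HWU, dif_neg (by simp [hb])]

lemma HWU_succ_of_mem_firstTrueAt (m : ℕ) {b : ℕ → Bool} {k : ℕ} (hb : b ∈ firstTrueAt k) :
    HWU (m + 1) b = ((k + 1 : ℕ) : ℕ∞) + max (HWU ((m + 1) / 2) fun j ↦ b (2 * j + (k + 1)))
      (HWU (m / 2) fun j ↦ b (2 * j + (k + 2))) := by
  have h : ∃ k, b k = true := ⟨k, hb.1⟩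
  have hk : Nat.find h = k := (Nat.find_eq_iff h).2 ⟨hb.1, fun j hj ↦ by simp [hb.2 j hj]⟩
  rw [HWU, dif_pos h, hk]
  congr 3
  funext j
  exact congrArg b (by omega)

lemma setOf_lt_HWU_succ (m t : ℕ) :
    {b : ℕ → Bool | (t : ℕ∞) < HWU (m + 1) b} = {b | ∀ k, b k = false} ∪
      ⋃ k, firstTrueAt k ∩ {b | t < k + 1 ∨
        ((t - (k + 1) : ℕ) : ℕ∞) < HWU ((m + 1) / 2) (fun j ↦ b (2 * j + (k + 1))) ∨
        ((t - (k + 1) : ℕ) : ℕ∞) < HWU (m / 2) (fun j ↦ b (2 * j + (k + 2)))} := by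
  ext b
  simp only [Set.mem_union, Set.mem_iUnion, Set.mem_inter_iff, Set.mem_ofPred_eq]
  constructor
  · intro h
    by_cases hb : ∀ k, b k = false
    · exact Or.inl hb
    push Not at hb
    obtain ⟨i, hi⟩ := hb
    obtain ⟨k, -, hk⟩ := exists_le_mem_firstTrueAt (by simpa using hi)
    rw [HWU_succ_of_mem_firstTrueAt m hk, ENat.natCast_lt_natCast_add_iff, lt_max_iff] at h
    exact Or.inr ⟨k, hk, h⟩
  · rintro (hb | ⟨k, hk, h⟩)
    · rw [HWU_succ_of_forall_false m hb]
      exact ENat.natCast_lt_top t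
    · rwa [HWU_succ_of_mem_firstTrueAt m hk, ENat.natCast_lt_natCast_add_iff, lt_max_iff]

lemma measurableSet_lt_HWU (m t : ℕ) : MeasurableSet {b : ℕ → Bool | (t : ℕ∞) < HWU m b} := by
  induction m using Nat.strong_induction_on generalizing t with
  | _ m ih =>
  cases m with
  | zero => simp [HWU]
  | succ m =>
    rw [setOf_lt_HWU_succ]
    refine .union ?_ (.iUnion fun k ↦ .inter ?_ ?_)
    · simp only [Set.ofPred_forall]
      exact .iInter fun k ↦ (measurableSet_singleton false).preimage (measurable_pi_apply k)
    · exact measurableSet_firstTrueAt k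
    · simp only [Set.ofPred_or]
      exact (MeasurableSet.const _).union
        ((measurable_reindex _ (ih _ (by omega) _)).union
          (measurable_reindex _ (ih _ (by omega) _)))

lemma setOf_lt_HWU_succ_subset (m t : ℕ) :
    {b : ℕ → Bool | (t : ℕ∞) < HWU (m + 1) b} ⊆ {b | ∀ i < t, b i = false} ∪
      ⋃ k ∈ Finset.range t, firstTrueAt k ∩
        ((fun b j ↦ b (2 * j + (k + 1))) ⁻¹' {b | ((t - (k + 1) : ℕ) : ℕ∞) < HWU ((m + 1) / 2) b} ∪
          (fun b j ↦ b (2 * j + (k + 2))) ⁻¹' {b | ((t - (k + 1) : ℕ) : ℕ∞) < HWU (m / 2) b}) := by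
  rw [setOf_lt_HWU_succ]
  rintro b (hb | hb)
  · exact Or.inl fun i _ ↦ hb i
  obtain ⟨k, hk, h⟩ := Set.mem_iUnion.1 hb
  by_cases hkt : k < t
  · exact Or.inr (Set.mem_biUnion (Finset.mem_coe.2 (Finset.mem_range.2 hkt))
      ⟨hk, h.resolve_left (by omega)⟩)
  · exact Or.inl fun i hi ↦ hk.2 i (by omega)

theorem measureReal_lt_HWU_le {c : ℝ} (hc : 1 ≤ c) (m t : ℕ) :
    (bernoulliSeq p).real {b | (t : ℕ∞) < HWU m b} ≤
      m * c ^ Nat.clog 2 m * (1 - p + p / c) ^ t := by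
  induction m using Nat.strong_induction_on generalizing t with
  | _ m ih =>
  cases m with
  | zero => simp [HWU]
  | succ m =>
  set r := 1 - p + p / c
  set a := (m + 1) / 2
  set a' := m / 2
  set X : ℝ := a * c ^ Nat.clog 2 a + a' * c ^ Nat.clog 2 a'
  have hX0 : 0 ≤ X := by positivity
  have hXc : X * c + 1 ≤ (m + 1 : ℕ) * c ^ Nat.clog 2 (m + 1) := by
    have haa' : (a : ℝ) + a' = m := by exact_mod_cast (show a + a' = m by omega)
    have h1 := natCast_mul_pow_clog_mul_le hc (show 2 * a ≤ m + 1 by omega)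
    have h2 := natCast_mul_pow_clog_mul_le hc (show 2 * a' ≤ m + 1 by omega)
    have h3 : 1 ≤ c ^ Nat.clog 2 (m + 1) := one_le_pow₀ hc
    push_cast
    linear_combination h1 + h2 + h3 + c ^ Nat.clog 2 (m + 1) * haa'
  have hchild (k : ℕ) : (bernoulliSeq p).real (firstTrueAt k ∩
      ((fun b j ↦ b (2 * j + (k + 1))) ⁻¹' {b | ((t - (k + 1) : ℕ) : ℕ∞) < HWU a b} ∪
        (fun b j ↦ b (2 * j + (k + 2))) ⁻¹' {b | ((t - (k + 1) : ℕ) : ℕ∞) < HWU a' b})) ≤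
      p * (1 - p) ^ k * (X * r ^ (t - (k + 1))) := by
    rw [Set.inter_union_distrib_left]
    refine (measureReal_union_le _ _).trans ?_
    rw [measureReal_firstTrueAt_inter_preimage (fun i j h ↦ by omega)
        (fun j ↦ by omega) (measurableSet_lt_HWU _ _),
      measureReal_firstTrueAt_inter_preimage (fun i j h ↦ by omega)
        (fun j ↦ by omega) (measurableSet_lt_HWU _ _), ← mul_add, add_mul]
    have hpk : 0 ≤ p * (1 - p) ^ k := mul_nonneg hp.out.1 (pow_nonneg (sub_nonneg.2 hp.out.2) k)
    gcongr
    exacts [ih a (by omega) _, ih a' (by omega) _]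
  calc (bernoulliSeq p).real {b | (t : ℕ∞) < HWU (m + 1) b}
      ≤ (bernoulliSeq p).real ({b | ∀ i < t, b i = false} ∪ ⋃ k ∈ Finset.range t, _) :=
        measureReal_mono (setOf_lt_HWU_succ_subset m t)
    _ ≤ (1 - p) ^ t + ∑ k ∈ Finset.range t, p * (1 - p) ^ k * (X * r ^ (t - (k + 1))) := by
        refine (measureReal_union_le _ _).trans (add_le_add (measureReal_forall_lt_false t).le
          ((measureReal_biUnion_finset_le _ _).trans (Finset.sum_le_sum fun k _ ↦ hchild k)))
    _ ≤ (X * c + 1) * r ^ t :=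
        pow_add_sum_mul_pow_le hp.out.1 (sub_nonneg.2 hp.out.2) (by linarith) hX0 t
    _ ≤ (m + 1 : ℕ) * c ^ Nat.clog 2 (m + 1) * r ^ t := mul_le_mul_of_nonneg_right hXc
        (pow_nonneg (add_nonneg (sub_nonneg.2 hp.out.2) (div_nonneg hp.out.1 (by linarith))) t)

end Bernoulli

theorem wu_random_failures_general (n : ℕ) (c : ℝ) (hc : 1 < c)
    (p : ℝ) (hp0 : 0 < p) (hp1 : p < 1)
    (μ : Measure (ℕ → Bool))
    (hμ : ∀ (s : Finset ℕ) (v : ℕ → Bool),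
      μ {b | ∀ i ∈ s, b i = v i} =
        ∏ i ∈ s, (if v i then ENNReal.ofReal p else ENNReal.ofReal (1 - p))) :
    μ {b | ENNReal.ofReal (c / p * ((Nat.clog 2 (n-1) : ℝ) + 1)) < (HWU (n-1) b : ℝ≥0∞)} ≤
      ENNReal.ofReal ((n : ℝ) *
        Real.exp (-((c-1)^2 / (2*c)) * ((Nat.clog 2 (n-1) : ℝ) - 1))) := by
  have : Fact (p ∈ Set.Icc (0 : ℝ) 1) := ⟨hp0.le, hp1.le⟩
  obtain rfl := eq_bernoulliSeq_of_cylinder hμ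
  set L := Nat.clog 2 (n - 1)
  set x := c / p * ((L : ℝ) + 1)
  have hx : 0 ≤ x := by positivity
  have hLt : c * L ≤ p * ⌊x⌋₊ := by
    have hpx : p * x = c * (L + 1) := by simp only [x]; field_simp
    nlinarith [Nat.sub_one_lt_floor x]
  have hK : 0 ≤ (c - 1) ^ 2 / (2 * c) := by positivity
  calc _ ≤ bernoulliSeq p {b | (⌊x⌋₊ : ℕ∞) < HWU (n - 1) b} :=
        measure_mono fun b hb ↦ natFloor_lt_of_ofReal_lt hx hb
    _ = ENNReal.ofReal ((bernoulliSeq p).real {b | (⌊x⌋₊ : ℕ∞) < HWU (n - 1) b}) :=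
        (ofReal_measureReal).symm
    _ ≤ _ := by
      refine ENNReal.ofReal_le_ofReal ((measureReal_lt_HWU_le hc.le _ _).trans ?_)
      rw [mul_assoc]
      refine mul_le_mul (by exact_mod_cast n.sub_le 1) ?_ (by positivity) n.cast_nonneg
      refine (pow_mul_pow_le_exp hc.le hp0.le hp1.le hLt).trans (Real.exp_le_exp.2 ?_)
      nlinarith

/-- Runtime of the WU algorithm under random failures: if each request succeeds
independently with probability `p` (i.e. `μ` is the i.i.d. Bernoulli(p) product
measure on `ℕ → Bool`), then the probability that the WU algorithm on `n`
processors (one informed, `n-1` uninformed) runs longer than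
`(c/p)(⌈log₂(n-1)⌉+1)` rounds is at most
`n · exp(-((c-1)²/(2c))(⌈log₂(n-1)⌉-1))`. -/
theorem wu_random_failures (n : ℕ) (hn : 2 ≤ n) (c : ℝ) (hc : 1 < c)
    (p : ℝ) (hp0 : 0 < p) (hp1 : p < 1)
    (μ : Measure (ℕ → Bool)) [IsProbabilityMeasure μ]
    (hμ : ∀ (s : Finset ℕ) (v : ℕ → Bool),
      μ {b | ∀ i ∈ s, b i = v i} =
        ∏ i ∈ s, (if v i then ENNReal.ofReal p else ENNReal.ofReal (1 - p))) :
    μ {b | ENNReal.ofReal (c / p * ((Nat.clog 2 (n-1) : ℝ) + 1)) < (HWU (n-1) b : ℝ≥0∞)} ≤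
      ENNReal.ofReal ((n : ℝ) *
        Real.exp (-((c-1)^2 / (2*c)) * ((Nat.clog 2 (n-1) : ℝ) - 1))) :=
  wu_random_failures_general n c hc p hp0 hp1 μ hμ
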